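/- If r = exp(ω ê) with 0 < ω < π and e a unit vector, then r − rᵀ = 2 sin(ω) ê; hence the matrix logarithm of r is given by log(r) = (ω / (2 sin ω)) (r − rᵀ). -/

import Mathlib

open Matrix

/-- The hat map: the skew-symmetric matrix `â` of `a ∈ ℝ³`, satisfying `â v = a × v`. -/
def hat (a : Fin 3 → ℝ) : Matrix (Fin 3) (Fin 3) ℝ :=
  !![0, -a 2, a 1; a 2, 0, -a 0; -a 1, a 0, 0]

/-!
Rodrigues' formula holds for any `A` with `A³ = -A`: the odd powers of `A` are `±A` and the
even ones past `A⁰` are `±A²`, so the exponential series splits into the sine series times `A`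
and the cosine series times `A²`, giving `exp (ω A) = 1 + sin ω A + (1 - cos ω) A²`. For
`A = ê` with `|e| = 1` the transpose is `exp (-ω ê)`, and subtracting the two Rodrigues
expansions leaves `2 sin ω ê`; since `sin ω > 0` on `(0, π)` one can divide by it.
-/

open NormedSpace Nat

section PowThreeEqNeg

variable {𝕜 R : Type*} [CommRing 𝕜] [Ring R] [Algebra 𝕜 R] {A : R}

theorem pow_two_mul_add_one_of_pow_three_eq_neg (hA : A ^ 3 = -A) (k : ℕ) :
    A ^ (2 * k + 1) = (-1 : 𝕜) ^ k • A := by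
  induction k with
  | zero => simp
  | succ k ih =>
    rw [show 2 * (k + 1) + 1 = 2 + (2 * k + 1) by ring, pow_add, ih, mul_smul_comm,
      ← pow_succ, hA, pow_succ, mul_neg_one, neg_smul, smul_neg]

theorem pow_two_mul_add_two_of_pow_three_eq_neg (hA : A ^ 3 = -A) (k : ℕ) :
    A ^ (2 * k + 2) = (-1 : 𝕜) ^ k • A ^ 2 := by
  rw [pow_succ, pow_two_mul_add_one_of_pow_three_eq_neg (𝕜 := 𝕜) hA, smul_mul_assoc, sq]

end PowThreeEqNeg

theorem exp_smul_of_pow_three_eq_neg {𝔸 : Type*} [NormedRing 𝔸] [NormedAlgebra ℝ 𝔸]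
    [CompleteSpace 𝔸] {A : 𝔸} (hA : A ^ 3 = -A) (ω : ℝ) :
    exp (ω • A) = 1 + Real.sin ω • A + (1 - Real.cos ω) • A ^ 2 := by
  have hodd : HasSum (fun k ↦ ((2 * k + 1)! : ℝ)⁻¹ • (ω • A) ^ (2 * k + 1))
      (Real.sin ω • A) := by
    refine ((Real.hasSum_sin ω).smul_const A).congr_fun fun k ↦ ?_
    rw [smul_pow, pow_two_mul_add_one_of_pow_three_eq_neg (𝕜 := ℝ) hA, smul_smul, smul_smul]
    congr 1
    ring
  have heven : HasSum (fun k ↦ ((2 * k)! : ℝ)⁻¹ • (ω • A) ^ (2 * k))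
      (1 + (1 - Real.cos ω) • A ^ 2) := by
    -- the constant term `1` of the series is the only one that is not a multiple of `A²`
    have hcos := (((hasSum_nat_add_iff' 1).mpr (Real.hasSum_cos ω)).neg).smul_const (A ^ 2)
    refine (hasSum_nat_add_iff' 1).mp ?_
    convert! hcos using 1
    · funext k
      rw [smul_pow, mul_add_one, pow_two_mul_add_two_of_pow_three_eq_neg (𝕜 := ℝ) hA, smul_smul,
        smul_smul]
      congr 1
      ring
    · simp
  rw [(exp_series_hasSum_exp' (𝕂 := ℝ) (ω • A)).unique (heven.even_add_odd hodd)]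
  abel

theorem Matrix.exp_smul_of_pow_three_eq_neg {n : Type*} [Fintype n] [DecidableEq n]
    {A : Matrix n n ℝ} (hA : A ^ 3 = -A) (ω : ℝ) :
    exp (ω • A) = 1 + Real.sin ω • A + (1 - Real.cos ω) • A ^ 2 := by
  let : NormedRing (Matrix n n ℝ) := Matrix.linftyOpNormedRing
  let : NormedAlgebra ℝ (Matrix n n ℝ) := Matrix.linftyOpNormedAlgebra
  exact _root_.exp_smul_of_pow_three_eq_neg hA ω

theorem hat_transpose (a : Fin 3 → ℝ) : (hat a)ᵀ = -hat a := by
  ext i j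
  fin_cases i <;> fin_cases j <;> simp [hat]

theorem hat_pow_three (a : Fin 3 → ℝ) : hat a ^ 3 = -(a ⬝ᵥ a) • hat a := by
  ext i j
  fin_cases i <;> fin_cases j <;>
    simp [hat, pow_succ, Matrix.mul_apply, Fin.sum_univ_three, dotProduct] <;> ring

theorem exp_smul_hat_sub_transpose (e : Fin 3 → ℝ) (he : e ⬝ᵥ e = 1) (ω : ℝ) :
    exp (ω • hat e) - (exp (ω • hat e))ᵀ = (2 * Real.sin ω) • hat e := by
  have hcube : hat e ^ 3 = -hat e := by rw [hat_pow_three, he, neg_one_smul]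
  rw [← exp_transpose, transpose_smul, hat_transpose, smul_neg, ← neg_smul,
    Matrix.exp_smul_of_pow_three_eq_neg hcube, Matrix.exp_smul_of_pow_three_eq_neg hcube,
    Real.sin_neg, Real.cos_neg]
  module

/-- If `r = exp(ω ê)` with `0 < ω < π` and `e` a unit vector, then
`r - rᵀ = 2 sin(ω) ê`; hence the matrix logarithm of `r` (namely `ω ê`) is given by
`log r = (ω / (2 sin ω)) (r - rᵀ)`. -/
theorem stmt_16 (e : Fin 3 → ℝ) (he : e ⬝ᵥ e = 1) (ω : ℝ)
    (hω₀ : 0 < ω) (hωπ : ω < Real.pi)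
    (r : Matrix (Fin 3) (Fin 3) ℝ) (hr : r = NormedSpace.exp (ω • hat e)) :
    r - rᵀ = (2 * Real.sin ω) • hat e ∧
    (ω / (2 * Real.sin ω)) • (r - rᵀ) = ω • hat e := by
  have hdiff : r - rᵀ = (2 * Real.sin ω) • hat e := hr ▸ exp_smul_hat_sub_transpose e he ω
  have hsin : 2 * Real.sin ω ≠ 0 := by
    have := Real.sin_pos_of_pos_of_lt_pi hω₀ hωπ
    positivity
  exact ⟨hdiff, by rw [hdiff, smul_smul, div_mul_cancel₀ _ hsin]⟩
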